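/- arXiv:2503.07515 — 3 statements merged into one kernel-verified Lean document; each statement's English description precedes it below -/
import Mathlib

section
/- Let q : X → Y be a continuous linear surjection of complex Banach spaces and M > 1. Then there exists a (not necessarily linear) continuous map ρ : Y → X such that q ∘ ρ = id_Y, ‖ρ(y)‖ ≤ M · inf{‖x‖ : x ∈ q⁻¹(y)} for all y ∈ Y, and ρ(λy) = λρ(y) for all λ ∈ ℂ and y ∈ Y. -/
open Set Function Filter Topology intervalIntegral Real
set_option linter.unusedSectionVars false
set_option linter.unusedVariables false
set_option maxHeartbeats 1000000

namespace BGaux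

variable {X Y : Type*} [NormedAddCommGroup X] [NormedSpace ℂ X] [CompleteSpace X]
    [NormedAddCommGroup Y] [NormedSpace ℂ Y] [CompleteSpace Y]

noncomputable def d (q : X →L[ℂ] Y) (y : Y) : ℝ := sInf {r : ℝ | ∃ x : X, q x = y ∧ ‖x‖ = r}

variable (q : X →L[ℂ] Y) (hq : Function.Surjective q)
include hq

theorem setNe (y : Y) : {r : ℝ | ∃ x : X, q x = y ∧ ‖x‖ = r}.Nonempty := by
  obtain ⟨x, hx⟩ := hq y; exact ⟨‖x‖, x, hx, rfl⟩

omit hq in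
theorem setBdd (y : Y) : BddBelow {r : ℝ | ∃ x : X, q x = y ∧ ‖x‖ = r} :=
  ⟨0, fun _ ⟨x, _, hx⟩ => hx ▸ norm_nonneg x⟩

theorem d_nonneg (y : Y) : 0 ≤ d q y :=
  le_csInf (setNe q hq y) fun r ⟨x, _, hx⟩ => hx ▸ norm_nonneg x

omit hq in
theorem d_le (x : X) : d q (q x) ≤ ‖x‖ := csInf_le (setBdd q _) ⟨x, rfl, rfl⟩

theorem exists_lt {y : Y} {b : ℝ} (hb : d q y < b) : ∃ x : X, q x = y ∧ ‖x‖ < b := by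
  obtain ⟨r, ⟨x, hx, hxr⟩, hrb⟩ := (csInf_lt_iff (setBdd q y) (setNe q hq y)).1 hb
  exact ⟨x, hx, hxr ▸ hrb⟩

theorem norm_le_opNorm_mul_d (y : Y) : ‖y‖ ≤ ‖q‖ * d q y := by
  refine le_of_forall_pos_le_add fun ε hε => ?_
  by_cases hqn : ‖q‖ = 0
  · obtain ⟨x, hx⟩ := hq y
    have : ‖y‖ ≤ 0 := hx ▸ (q.le_opNorm x).trans (by rw [hqn]; simp)
    nlinarith [d_nonneg q hq y, norm_nonneg q]
  · have hqpos : (0:ℝ) < ‖q‖ := lt_of_le_of_ne (norm_nonneg q) (Ne.symm hqn)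
    obtain ⟨x, hx, hxn⟩ := exists_lt q hq (lt_add_of_pos_right (d q y) (show (0:ℝ) < ε / ‖q‖ by positivity))
    calc ‖y‖ = ‖q x‖ := by rw [hx]
    _ ≤ ‖q‖ * ‖x‖ := q.le_opNorm x
    _ ≤ ‖q‖ * (d q y + ε / ‖q‖) := by nlinarith
    _ = ‖q‖ * d q y + ε := by field_simp

theorem d_zero : d q 0 = 0 :=
  le_antisymm (by simpa using d_le q 0) (d_nonneg q hq 0)

theorem d_le_C {C : ℝ} (hC : ∀ y : Y, ∃ x, q x = y ∧ ‖x‖ ≤ C * ‖y‖) (y : Y) :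
    d q y ≤ C * ‖y‖ := by
  obtain ⟨x, hx, hxn⟩ := hC y
  exact (hx ▸ d_le q x).trans hxn

theorem d_sub_le {C : ℝ} (hC : ∀ y : Y, ∃ x, q x = y ∧ ‖x‖ ≤ C * ‖y‖) (y y' : Y) :
    d q y ≤ d q y' + C * ‖y - y'‖ := by
  refine le_of_forall_pos_le_add fun ε hε => ?_
  obtain ⟨x', hx', hx'n⟩ := exists_lt q hq (show d q y' < d q y' + ε by linarith)
  obtain ⟨z, hz, hzn⟩ := hC (y - y')
  have hxz : q (x' + z) = y := by rw [map_add, hx', hz]; abel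
  calc d q y ≤ ‖x' + z‖ := hxz ▸ d_le q (x' + z)
  _ ≤ ‖x'‖ + ‖z‖ := norm_add_le _ _
  _ ≤ d q y' + C * ‖y - y'‖ + ε := by linarith

theorem d_continuous {C : ℝ} (hC0 : 0 ≤ C) (hC : ∀ y : Y, ∃ x, q x = y ∧ ‖x‖ ≤ C * ‖y‖) :
    Continuous (d q) := by
  refine (LipschitzWith.of_dist_le_mul (K := C.toNNReal) fun y y' => ?_).continuous
  rw [Real.coe_toNNReal _ hC0, Real.dist_eq, abs_sub_le_iff, dist_eq_norm]
  constructor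
  · linarith [d_sub_le q hq hC y y']
  · rw [← norm_neg (y - y')] at *
    simp only [neg_sub] at *
    linarith [d_sub_le q hq hC y' y]

theorem d_smul (c : ℂ) (y : Y) : d q (c • y) = ‖c‖ * d q y := by
  have key : ∀ (c : ℂ) (y : Y), d q (c • y) ≤ ‖c‖ * d q y := by
    intro c y
    rcases eq_or_ne c 0 with rfl | hc
    · simp [d_zero q hq, d_nonneg q hq (0:Y)]
    · have : ‖c‖⁻¹ * d q (c • y) ≤ d q y := by
        refine le_csInf (setNe q hq y) fun r ⟨x, hx, hxr⟩ => ?_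
        have h1 : d q (c • y) ≤ ‖c • x‖ := by
          have : q (c • x) = c • y := by rw [map_smul, hx]
          exact this ▸ d_le q (c • x)
        rw [norm_smul] at h1
        have hc' : (0:ℝ) < ‖c‖ := norm_pos_iff.2 hc
        rw [inv_mul_le_iff₀ hc', mul_comm]
        rw [hxr] at h1; linarith [h1]
      have hc' : (0:ℝ) < ‖c‖ := norm_pos_iff.2 hc
      calc d q (c • y) = ‖c‖ * (‖c‖⁻¹ * d q (c • y)) := (mul_inv_cancel_left₀ hc'.ne' _).symm
      _ ≤ ‖c‖ * d q y := by nlinarith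
  rcases eq_or_ne c 0 with rfl | hc
  · simp [d_zero q hq]
  · refine le_antisymm (key c y) ?_
    have := key c⁻¹ (c • y)
    rw [smul_smul, inv_mul_cancel₀ hc, one_smul, norm_inv] at this
    have hc' : (0:ℝ) < ‖c‖ := norm_pos_iff.2 hc
    rw [← mul_le_mul_iff_right₀ (inv_pos.2 hc'), inv_mul_cancel_left₀ hc'.ne']
    exact this


theorem d_pos {y : Y} (hy : y ≠ 0) : 0 < d q y := by
  have h1 := norm_le_opNorm_mul_d q hq y
  have h2 : 0 < ‖y‖ := norm_pos_iff.2 hy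
  nlinarith [norm_nonneg q, d_nonneg q hq y]

theorem approx_sel {C ε δ : ℝ} (hC0 : 0 < C)
    (hC : ∀ y : Y, ∃ x, q x = y ∧ ‖x‖ ≤ C * ‖y‖) (hε : 0 < ε) (hδ : 0 < δ) :
    ∃ s : Y → X, Continuous s ∧
      ∀ y : Y, ‖s y‖ ≤ (1 + ε) * d q y ∧ ‖q (s y) - y‖ ≤ δ * d q y := by
  have hdc : Continuous (d q) := d_continuous q hq hC0.le hC
  -- the convex-valued family on nonzero vectors
  set D := {y : Y // y ≠ 0}
  set t : D → Set X := fun u =>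
    {x | ‖x‖ ≤ (1 + ε) * d q u.1 ∧ ‖q x - u.1‖ ≤ δ * d q u.1} with ht_def
  have hconv : ∀ u : D, Convex ℝ (t u) := by
    intro u x₁ h₁ x₂ h₂ a b ha hb hab
    constructor
    · calc ‖a • x₁ + b • x₂‖ ≤ ‖a • x₁‖ + ‖b • x₂‖ := norm_add_le _ _
      _ = a * ‖x₁‖ + b * ‖x₂‖ := by
          rw [norm_smul, norm_smul, Real.norm_eq_abs, Real.norm_eq_abs,
            abs_of_nonneg ha, abs_of_nonneg hb]
      _ ≤ a * ((1 + ε) * d q u.1) + b * ((1 + ε) * d q u.1) := by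
          have := h₁.1; have := h₂.1; nlinarith
      _ = (1 + ε) * d q u.1 := by rw [← add_mul, hab, one_mul]
    · have key : q (a • x₁ + b • x₂) - u.1 = a • (q x₁ - u.1) + b • (q x₂ - u.1) :=
        calc q (a • x₁ + b • x₂) - u.1 = a • (q x₁) + b • (q x₂) - (a + b) • u.1 := by
              rw [map_add, q.map_smul_of_tower, q.map_smul_of_tower, hab, one_smul]
        _ = a • (q x₁ - u.1) + b • (q x₂ - u.1) := by
              rw [add_smul, smul_sub, smul_sub]; abel
      rw [key]
      calc ‖a • (q x₁ - u.1) + b • (q x₂ - u.1)‖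
          ≤ ‖a • (q x₁ - u.1)‖ + ‖b • (q x₂ - u.1)‖ := norm_add_le _ _
      _ = a * ‖q x₁ - u.1‖ + b * ‖q x₂ - u.1‖ := by
          rw [norm_smul, norm_smul, Real.norm_eq_abs, Real.norm_eq_abs,
            abs_of_nonneg ha, abs_of_nonneg hb]
      _ ≤ a * (δ * d q u.1) + b * (δ * d q u.1) := by
          have := h₁.2; have := h₂.2; nlinarith
      _ = δ * d q u.1 := by rw [← add_mul, hab, one_mul]
  have hloc : ∀ u : D, ∃ c : X, ∀ᶠ v : D in nhds u, c ∈ t v := by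
    intro u
    have hd0 : 0 < d q u.1 := d_pos q hq u.2
    obtain ⟨x₀, hx₀, hx₀n⟩ := exists_lt q hq
      (show d q u.1 < (1 + ε / 2) * d q u.1 by nlinarith)
    refine ⟨x₀, ?_⟩
    have hUopen : IsOpen {y : Y | (1 + ε / 2) * d q u.1 < (1 + ε) * d q y ∧
        ‖u.1 - y‖ < δ * d q y} := by
      apply IsOpen.inter
      · exact isOpen_lt continuous_const (continuous_const.mul hdc)
      · exact isOpen_lt (continuous_const.sub continuous_id).norm (continuous_const.mul hdc)
    have hmem : u.1 ∈ {y : Y | (1 + ε / 2) * d q u.1 < (1 + ε) * d q y ∧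
        ‖u.1 - y‖ < δ * d q y} := by
      constructor
      · nlinarith
      · simpa using by positivity
    have : Subtype.val ⁻¹' {y : Y | (1 + ε / 2) * d q u.1 < (1 + ε) * d q y ∧
        ‖u.1 - y‖ < δ * d q y} ∈ nhds u :=
      continuous_subtype_val.continuousAt.preimage_mem_nhds (hUopen.mem_nhds hmem)
    filter_upwards [this] with v hv
    refine ⟨le_trans hx₀n.le ?_, ?_⟩
    · nlinarith [hv.1]
    · rw [hx₀]; exact hv.2.le
  obtain ⟨σ, hσ⟩ := exists_continuous_forall_mem_convex_of_local_const hconv hloc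
  -- extend by homogeneity-compatible zero value at the origin
  classical
  refine ⟨fun y => if h : y = 0 then 0 else σ ⟨y, h⟩, ?_, ?_⟩
  · rw [continuous_iff_continuousAt]
    intro y₀
    rcases eq_or_ne y₀ 0 with rfl | hy₀
    · rw [ContinuousAt, dif_pos rfl]
      apply squeeze_zero_norm (a := fun y => (1 + ε) * (C * ‖y‖))
      · intro y
        rcases eq_or_ne y 0 with rfl | hy
        · simp
        · rw [dif_neg hy]
          exact le_trans (hσ ⟨y, hy⟩).1 (by nlinarith [d_le_C q hq hC y, norm_nonneg y])
      · have : Tendsto (fun y : Y => (1 + ε) * (C * ‖y‖)) (nhds 0) (nhds ((1+ε)*(C*‖(0:Y)‖))) :=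
          (continuous_const.mul (continuous_const.mul continuous_norm)).tendsto 0
        simpa using this
    · have hopen : IsOpen {y : Y | y ≠ 0} := isOpen_ne
      refine ContinuousOn.continuousAt ?_ (hopen.mem_nhds hy₀)
      rw [continuousOn_iff_continuous_restrict]
      have : domRestrict {y : Y | y ≠ 0} (fun y => if h : y = 0 then 0 else σ ⟨y, h⟩) =
          fun u => σ ⟨u.1, u.2⟩ := by
        funext u; simp only [domRestrict]; rw [dif_neg u.2]
      rw [this]
      exact σ.continuous.comp (by fun_prop)
  · intro y
    rcases eq_or_ne y 0 with rfl | hy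
    · simp [d_zero q hq]
    · beta_reduce
      rw [dif_neg hy]
      exact ⟨(hσ ⟨y, hy⟩).1, (hσ ⟨y, hy⟩).2⟩


theorem d_real_smul (r : ℝ) (y : Y) : d q (r • y) = |r| * d q y := by
  rw [← algebraMap_smul ℂ r y, d_smul q hq]
  norm_num [Real.norm_eq_abs]

theorem exists_rho0 {M : ℝ} (hM : 1 < M) :
    ∃ ρ₀ : Y → X, Continuous ρ₀ ∧ (∀ y, q (ρ₀ y) = y) ∧
      (∀ y, ‖ρ₀ y‖ ≤ M * d q y) ∧
      (∀ r : ℝ, 0 ≤ r → ∀ y, ρ₀ (r • y) = r • ρ₀ y) := by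
  classical
  obtain ⟨C, hCpos, hC'⟩ := q.exists_preimage_norm_le hq
  have hC : ∀ y : Y, ∃ x, q x = y ∧ ‖x‖ ≤ C * ‖y‖ := hC'
  set ε : ℝ := (M - 1) / (M + 1) with hε_def
  have hε : 0 < ε := div_pos (by linarith) (by linarith)
  have hε1 : ε < 1 := by rw [div_lt_one (by linarith)]; linarith
  have hMε : (1 + ε) * (1 - ε)⁻¹ = M := by
    rw [hε_def]
    have h1 : M + 1 ≠ 0 := by positivity
    field_simp
    ring
  set δ : ℝ := ε / C with hδ_def
  have hδ : 0 < δ := by positivity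
  obtain ⟨s, hscont, hs⟩ := approx_sel q hq hCpos hC hε hδ
  -- the iteration on the unit sphere
  set S := {u : Y // ‖u‖ = 1} with hS_def
  let g : ℕ → S → Y := fun n => n.rec (fun u => u.1) (fun _ gn u => gn u - q (s (gn u)))
  have hg0 : ∀ u, g 0 u = u.1 := fun _ => rfl
  have hgsucc : ∀ n u, g (n + 1) u = g n u - q (s (g n u)) := fun _ _ => rfl
  have hdu : ∀ u : S, d q u.1 ≤ C := fun u => by
    have := d_le_C q hq hC u.1; rw [u.2] at this; simpa using this
  have hdg : ∀ n (u : S), d q (g n u) ≤ ε ^ n * d q u.1 := by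
    intro n
    induction n with
    | zero => intro u; rw [hg0, pow_zero, one_mul]
    | succ n ih =>
      intro u
      have h1 : ‖g (n + 1) u‖ ≤ δ * d q (g n u) := by
        rw [hgsucc, norm_sub_rev]; exact (hs (g n u)).2
      calc d q (g (n + 1) u) ≤ C * ‖g (n + 1) u‖ := d_le_C q hq hC _
      _ ≤ C * (δ * d q (g n u)) := by nlinarith [d_nonneg q hq (g n u), norm_nonneg (g (n+1) u)]
      _ = ε * d q (g n u) := by rw [hδ_def]; field_simp
      _ ≤ ε * (ε ^ n * d q u.1) := by nlinarith [ih u]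
      _ = ε ^ (n + 1) * d q u.1 := by ring
  have hsg : ∀ n (u : S), ‖s (g n u)‖ ≤ (1 + ε) * C * ε ^ n := by
    intro n u
    calc ‖s (g n u)‖ ≤ (1 + ε) * d q (g n u) := (hs _).1
    _ ≤ (1 + ε) * (ε ^ n * d q u.1) := mul_le_mul_of_nonneg_left (hdg n u) (by linarith)
    _ ≤ (1 + ε) * (ε ^ n * C) := mul_le_mul_of_nonneg_left
        (mul_le_mul_of_nonneg_left (hdu u) (pow_nonneg hε.le n)) (by linarith)
    _ = (1 + ε) * C * ε ^ n := by ring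
  have hgcont : ∀ n, Continuous (g n) := by
    intro n
    induction n with
    | zero => exact continuous_subtype_val
    | succ n ih => exact ih.sub (q.continuous.comp (hscont.comp ih))
  have hgeo : Summable fun n : ℕ => (1 + ε) * C * ε ^ n :=
    Summable.mul_left _ (summable_geometric_of_lt_one hε.le hε1)
  have hsummable : ∀ u : S, Summable fun n => s (g n u) := by
    intro u
    exact Summable.of_norm_bounded hgeo (fun n => hsg n u)
  set τ : S → X := fun u => ∑' n, s (g n u) with hτ_def
  have hτcont : Continuous τ := by
    rw [hτ_def]
    apply continuous_tsum (u := fun n => (1 + ε) * C * ε ^ n)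
      (fun n => hscont.comp (hgcont n)) hgeo (fun n u => hsg n u)
  have hτnorm : ∀ u : S, ‖τ u‖ ≤ M * d q u.1 := by
    intro u
    have hsn : Summable fun n => ‖s (g n u)‖ :=
      Summable.of_nonneg_of_le (fun n => norm_nonneg _) (fun n => hsg n u) hgeo
    have h2 : ∀ n, ‖s (g n u)‖ ≤ (1 + ε) * d q u.1 * ε ^ n := by
      intro n
      calc ‖s (g n u)‖ ≤ (1 + ε) * d q (g n u) := (hs _).1
      _ ≤ (1 + ε) * (ε ^ n * d q u.1) := mul_le_mul_of_nonneg_left (hdg n u) (by linarith)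
      _ = (1 + ε) * d q u.1 * ε ^ n := by ring
    calc ‖τ u‖ ≤ ∑' n, ‖s (g n u)‖ := norm_tsum_le_tsum_norm hsn
    _ ≤ ∑' n, (1 + ε) * d q u.1 * ε ^ n := by
        apply Summable.tsum_le_tsum h2 hsn
        exact Summable.mul_left _ (summable_geometric_of_lt_one hε.le hε1)
    _ = (1 + ε) * d q u.1 * (1 - ε)⁻¹ := by
        rw [tsum_mul_left, tsum_geometric_of_lt_one hε.le hε1]
    _ = M * d q u.1 := by rw [← hMε]; ring
  have hτinv : ∀ u : S, q (τ u) = u.1 := by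
    intro u
    have hterm : ∀ n, q (s (g n u)) = g n u - g (n + 1) u := by
      intro n; rw [hgsucc]; abel
    rw [hτ_def]
    rw [ContinuousLinearMap.map_tsum q (hsummable u)]
    have hsum2 : Summable fun n => g n u - g (n + 1) u := by
      apply Summable.congr ((hsummable u).map q.toLinearMap.toAddMonoidHom q.continuous)
      intro n; exact hterm n
    have hlim : Tendsto (fun n => g n u) atTop (nhds 0) := by
      apply squeeze_zero_norm (a := fun n => ‖q‖ * C * ε ^ n)
      · intro n
        calc ‖g n u‖ ≤ ‖q‖ * d q (g n u) := norm_le_opNorm_mul_d q hq _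
        _ ≤ ‖q‖ * (ε ^ n * C) := mul_le_mul_of_nonneg_left ((hdg n u).trans
            (mul_le_mul_of_nonneg_left (hdu u) (pow_nonneg hε.le n))) (norm_nonneg q)
        _ = ‖q‖ * C * ε ^ n := by ring
      · simpa using (tendsto_pow_atTop_nhds_zero_of_lt_one hε.le hε1).const_mul (‖q‖ * C)
    have htel : ∀ N : ℕ, ∑ n ∈ Finset.range N, (g n u - g (n + 1) u) = u.1 - g N u := by
      intro N; rw [Finset.sum_range_sub' (fun n => g n u), hg0]
    have h2 : Tendsto (fun N : ℕ => ∑ n ∈ Finset.range N, (g n u - g (n + 1) u))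
        atTop (nhds u.1) := by
      simp only [htel]
      simpa using tendsto_const_nhds.sub hlim
    have h4 : (∑' n, (g n u - g (n + 1) u)) = u.1 :=
      tendsto_nhds_unique hsum2.hasSum.tendsto_sum_nat h2
    calc ∑' n, q (s (g n u)) = ∑' n, (g n u - g (n + 1) u) := tsum_congr hterm
    _ = u.1 := h4
  -- extend homogeneously
  have hmem : ∀ {y : Y}, y ≠ 0 → ‖‖y‖⁻¹ • y‖ = 1 := by
    intro y hy
    rw [norm_smul, Real.norm_eq_abs, abs_inv, abs_of_nonneg (norm_nonneg y),
      inv_mul_cancel₀ (norm_ne_zero_iff.2 hy)]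
  set ρ₀ : Y → X := fun y => if h : y = 0 then 0 else ‖y‖ • τ ⟨‖y‖⁻¹ • y, hmem h⟩ with hρ₀_def
  have hρ₀0 : ρ₀ 0 = 0 := by rw [hρ₀_def]; simp
  have hinv : ∀ y, q (ρ₀ y) = y := by
    intro y
    rcases eq_or_ne y 0 with rfl | hy
    · rw [hρ₀0]; simp
    · rw [hρ₀_def]
      simp only [dif_neg hy]
      rw [q.map_smul_of_tower, hτinv, smul_smul, mul_inv_cancel₀ (norm_ne_zero_iff.2 hy),
        one_smul]
  have hbound : ∀ y, ‖ρ₀ y‖ ≤ M * d q y := by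
    intro y
    rcases eq_or_ne y 0 with rfl | hy
    · simp [hρ₀0, d_zero q hq]
    · rw [hρ₀_def]
      simp only [dif_neg hy]
      have h1 : d q (‖y‖⁻¹ • y) = ‖y‖⁻¹ * d q y := by
        rw [d_real_smul q hq, abs_inv, abs_of_nonneg (norm_nonneg y)]
      rw [norm_smul, Real.norm_eq_abs, abs_of_nonneg (norm_nonneg y)]
      have h2 := hτnorm ⟨‖y‖⁻¹ • y, hmem hy⟩
      simp only [h1] at h2
      have hy' : 0 < ‖y‖ := norm_pos_iff.2 hy
      calc ‖y‖ * ‖τ ⟨‖y‖⁻¹ • y, hmem hy⟩‖ ≤ ‖y‖ * (M * (‖y‖⁻¹ * d q y)) := by nlinarith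
      _ = M * d q y := by field_simp
  have hhomog : ∀ r : ℝ, 0 ≤ r → ∀ y, ρ₀ (r • y) = r • ρ₀ y := by
    intro r hr y
    rcases eq_or_lt_of_le hr with rfl | hrpos
    · rw [zero_smul, hρ₀0, zero_smul]
    rcases eq_or_ne y 0 with rfl | hy
    · rw [smul_zero, hρ₀0, smul_zero]
    · have hry : r • y ≠ 0 := smul_ne_zero (ne_of_gt hrpos) hy
      rw [hρ₀_def]
      simp only [dif_neg hy, dif_neg hry]
      have hnorm : ‖r • y‖ = r * ‖y‖ := by
        rw [norm_smul, Real.norm_eq_abs, abs_of_pos hrpos]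
      have hpt : (⟨‖r • y‖⁻¹ • (r • y), hmem hry⟩ : S) = ⟨‖y‖⁻¹ • y, hmem hy⟩ := by
        apply Subtype.ext
        simp only
        rw [hnorm, smul_smul]
        congr 1
        field_simp
      rw [hpt, hnorm, smul_smul]
  have hcont : Continuous ρ₀ := by
    rw [continuous_iff_continuousAt]
    intro y₀
    rcases eq_or_ne y₀ 0 with rfl | hy₀
    · rw [ContinuousAt, hρ₀0]
      apply squeeze_zero_norm (a := fun y => M * (C * ‖y‖))
      · intro y
        calc ‖ρ₀ y‖ ≤ M * d q y := hbound y
        _ ≤ M * (C * ‖y‖) := by nlinarith [d_le_C q hq hC y, d_nonneg q hq y]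
      · have : Tendsto (fun y : Y => M * (C * ‖y‖)) (nhds 0) (nhds (M * (C * ‖(0:Y)‖))) :=
          ((continuous_const.mul
          (continuous_const.mul continuous_norm)).tendsto (0 : Y))
        simpa using this
    · refine ContinuousOn.continuousAt ?_ (isOpen_ne.mem_nhds hy₀)
      rw [continuousOn_iff_continuous_restrict]
      have heq : domRestrict {y : Y | y ≠ 0} ρ₀ =
          fun u => ‖u.1‖ • τ ⟨‖u.1‖⁻¹ • u.1, hmem u.2⟩ := by
        funext u; simp only [domRestrict, hρ₀_def]; rw [dif_neg u.2]
      rw [heq]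
      have hvn : Continuous fun u : {y : Y | y ≠ 0} => ‖u.1‖ :=
        continuous_norm.comp continuous_subtype_val
      refine hvn.smul (hτcont.comp ?_)
      apply Continuous.subtype_mk
      exact (hvn.inv₀ (fun u => norm_ne_zero_iff.2 u.2)).smul continuous_subtype_val
  exact ⟨ρ₀, hcont, hinv, hbound, hhomog⟩


theorem main {M : ℝ} (hM : 1 < M) :
    ∃ ρ : Y → X, Continuous ρ ∧ (∀ y : Y, q (ρ y) = y) ∧
      (∀ y : Y, ‖ρ y‖ ≤ M * d q y) ∧
      (∀ (c : ℂ) (y : Y), ρ (c • y) = c • ρ y) := by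
  obtain ⟨ρ₀, hcont, hinv, hbound, hhomog⟩ := exists_rho0 q hq hM
  have hρ₀0 : ρ₀ 0 = 0 := by
    have := hhomog 0 le_rfl 0
    simpa using this
  set e : ℝ → ℂ := fun θ => Complex.exp (θ * Complex.I) with he_def
  have he_norm : ∀ θ, ‖e θ‖ = 1 := fun θ => Complex.norm_exp_ofReal_mul_I θ
  have he_cont : Continuous e :=
    Complex.continuous_exp.comp ((Complex.continuous_ofReal).mul continuous_const)
  have he_add : ∀ a b : ℝ, e (a + b) = e a * e b := by
    intro a b
    rw [he_def]
    simp only [Complex.ofReal_add, add_mul, Complex.exp_add]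
  have he_per : ∀ θ : ℝ, e (θ + 2 * π) = e θ := by
    intro θ
    rw [he_add]
    have : e (2 * π) = 1 := by
      rw [he_def]
      simp only
      rw [show ((2 * π : ℝ) : ℂ) * Complex.I = 2 * ↑π * Complex.I by push_cast; ring,
        Complex.exp_two_pi_mul_I]
    rw [this, mul_one]
  have he_zero : e 0 = 1 := by rw [he_def]; simp
  set F : ℝ → Y → X := fun θ y => e (-θ) • ρ₀ (e θ • y) with hF_def
  have hFcont : Continuous fun p : Y × ℝ => F p.2 p.1 := by
    rw [hF_def]
    have h1 : Continuous fun p : Y × ℝ => e (-p.2) := by fun_prop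
    have h2 : Continuous fun p : Y × ℝ => ρ₀ (e p.2 • p.1) := by fun_prop
    exact h1.smul h2
  have hFy_cont : ∀ y, Continuous fun θ => F θ y := by
    intro y
    rw [hF_def]
    fun_prop
  have hFint : ∀ (y : Y) (a b : ℝ), IntervalIntegrable (fun θ => F θ y) MeasureTheory.volume a b :=
    fun y a b => (hFy_cont y).intervalIntegrable a b
  set ρ : Y → X := fun y => (2 * π)⁻¹ • ∫ θ in (0:ℝ)..(2 * π), F θ y with hρ_def
  have hπ : (0:ℝ) < 2 * π := by positivity
  refine ⟨ρ, ?_, ?_, ?_, ?_⟩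
  · rw [hρ_def]
    apply Continuous.const_smul
    exact continuous_parametric_intervalIntegral_of_continuous'
      (f := fun y θ => F θ y) (by exact hFcont) 0 (2 * π)
  · intro y
    rw [hρ_def]
    simp only
    rw [q.map_smul_of_tower, ← q.intervalIntegral_comp_comm (hFint y 0 (2 * π))]
    have hqF : ∀ θ : ℝ, q (F θ y) = y := by
      intro θ
      rw [hF_def]
      simp only
      rw [map_smul, hinv, smul_smul, ← he_add, neg_add_cancel, he_zero, one_smul]
    simp only [hqF]
    rw [intervalIntegral.integral_const, sub_zero, smul_smul, inv_mul_cancel₀ hπ.ne',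
      one_smul]
  · intro y
    rw [hρ_def]
    simp only
    have h1 : ∀ θ ∈ Set.uIoc (0:ℝ) (2 * π), ‖F θ y‖ ≤ M * d q y := by
      intro θ _
      rw [hF_def]
      simp only
      rw [norm_smul, he_norm, one_mul]
      calc ‖ρ₀ (e θ • y)‖ ≤ M * d q (e θ • y) := hbound _
      _ = M * d q y := by rw [d_smul q hq, he_norm, one_mul]
    calc ‖(2 * π)⁻¹ • ∫ θ in (0:ℝ)..(2 * π), F θ y‖
        = (2 * π)⁻¹ * ‖∫ θ in (0:ℝ)..(2 * π), F θ y‖ := by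
          rw [norm_smul, Real.norm_eq_abs, abs_of_pos (inv_pos.2 hπ)]
    _ ≤ (2 * π)⁻¹ * (M * d q y * |2 * π - 0|) :=
          mul_le_mul_of_nonneg_left
            (intervalIntegral.norm_integral_le_of_norm_le_const h1) (inv_pos.2 hπ).le
    _ = M * d q y := by
          rw [sub_zero, abs_of_pos hπ]
          field_simp
  · intro c y
    have hrsmulY : ∀ (r : ℝ) (w : Y), r • w = (r : ℂ) • w := fun r w => by
      rw [← algebraMap_smul ℂ r w]; norm_num
    have hrsmulX : ∀ (r : ℝ) (w : X), r • w = (r : ℂ) • w := fun r w => by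
      rw [← algebraMap_smul ℂ r w]; norm_num
    rcases eq_or_ne c 0 with rfl | hc
    · have hz : ∀ θ : ℝ, F θ ((0:ℂ) • y) = 0 := by
        intro θ
        rw [hF_def]
        simp only
        rw [zero_smul, smul_zero, hρ₀0, smul_zero]
      have : ρ ((0:ℂ) • y) = 0 := by
        rw [hρ_def]
        simp only [hz, intervalIntegral.integral_zero, smul_zero]
      rw [this, zero_smul]
    · set α := c.arg with hα_def
      have hcabs : (‖c‖ : ℂ) * e α = c := by
        rw [he_def, hα_def]
        exact_mod_cast Complex.norm_mul_exp_arg_mul_I c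
      have habs : (0:ℝ) ≤ ‖c‖ := norm_nonneg c
      have key : ∀ θ, F θ (c • y) = c • F (θ + α) y := by
        intro θ
        rw [hF_def]
        simp only
        have h1 : e θ • (c • y) = (‖c‖ : ℝ) • (e (θ + α) • y) := by
          rw [smul_smul, hrsmulY, smul_smul, he_add]
          congr 1
          conv_lhs => rw [← hcabs]
          ring
        have hcoe : e (-θ) * (‖c‖ : ℂ) = c * e (-(θ + α)) := by
          conv_rhs => rw [← hcabs]
          rw [mul_assoc, ← he_add, show α + -(θ + α) = -θ by ring]
          ring
        rw [h1, hhomog _ habs, hrsmulX, smul_smul, hcoe, ← smul_smul]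
      have hper : Function.Periodic (fun θ => F θ y) (2 * π) := by
        intro θ
        rw [hF_def]
        simp only
        have h2 : e (-(θ + 2 * π)) = e (-θ) := by
          have := he_per (-(θ + 2 * π))
          rw [show -(θ + 2 * π) + 2 * π = -θ by ring] at this
          exact this.symm
        rw [he_per, h2]
      rw [hρ_def]
      simp only [key]
      rw [intervalIntegral.integral_smul]
      have h3 : (∫ θ in (0:ℝ)..(2 * π), F (θ + α) y) = ∫ θ in (0:ℝ)..(2 * π), F θ y := by
        rw [intervalIntegral.integral_comp_add_right (fun θ => F θ y) α, zero_add,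
          add_comm (2 * π) α]
        have := hper.intervalIntegral_add_eq α 0
        rw [zero_add] at this
        exact this
      rw [h3, smul_comm]


end BGaux

/-- **Michael's refinement of the Bartle--Graves selection theorem.**
If `q : X → Y` is a continuous linear surjection of complex Banach spaces and `M > 1`,
there is a continuous (not necessarily linear) right inverse `ρ` of `q` which is
homogeneous and satisfies `‖ρ y‖ ≤ M · inf {‖x‖ : q x = y}`. -/
theorem bartle_graves_michael
    {X Y : Type*} [NormedAddCommGroup X] [NormedSpace ℂ X] [CompleteSpace X]
    [NormedAddCommGroup Y] [NormedSpace ℂ Y] [CompleteSpace Y]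
    (q : X →L[ℂ] Y) (hq : Function.Surjective q) {M : ℝ} (hM : 1 < M) :
    ∃ ρ : Y → X, Continuous ρ ∧
      (∀ y : Y, q (ρ y) = y) ∧
      (∀ y : Y, ‖ρ y‖ ≤ M * sInf {r : ℝ | ∃ x : X, q x = y ∧ ‖x‖ = r}) ∧
      (∀ (c : ℂ) (y : Y), ρ (c • y) = c • ρ y) := by
  obtain ⟨ρ, h1, h2, h3, h4⟩ := BGaux.main q hq hM
  exact ⟨ρ, h1, h2, fun y => h3 y, h4⟩
end

section
/- For every ε > 0 there exists δ > 0 such that for every C*-algebra A, every positive contraction a ∈ A, and every contraction x ∈ A with ‖[x, a]‖ < δ, one has ‖[x, √a]‖ < ε, where √a denotes the positive square root of a and [x,y] = xy − yx. -/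
open scoped NNReal

/-- `pw a n = a ^ (n+1)` in a non-unital setting. -/
def pw {A : Type} [Mul A] (a : A) : ℕ → A
  | 0 => a
  | n + 1 => pw a n * a

lemma norm_pw_le_one {A : Type} [NonUnitalCStarAlgebra A] (a : A) (ha : ‖a‖ ≤ 1) (n : ℕ) :
    ‖pw a n‖ ≤ 1 := by
  induction n with
  | zero => exact ha
  | succ n ih =>
    calc ‖pw a n * a‖ ≤ ‖pw a n‖ * ‖a‖ := norm_mul_le _ _
      _ ≤ 1 * 1 := mul_le_mul ih ha (norm_nonneg a) one_pos.le
      _ = 1 := one_mul 1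

lemma comm_pw_bound {A : Type} [NonUnitalCStarAlgebra A] (a x : A) (ha : ‖a‖ ≤ 1)
    (n : ℕ) : ‖x * pw a n - pw a n * x‖ ≤ (n + 1) * ‖x * a - a * x‖ := by
  induction n with
  | zero => simp [pw]
  | succ n ih =>
    have key : x * pw a (n + 1) - pw a (n + 1) * x
        = (x * pw a n - pw a n * x) * a + pw a n * (x * a - a * x) := by
      show x * (pw a n * a) - (pw a n * a) * x = _
      noncomm_ring
    have h1 : ‖(x * pw a n - pw a n * x) * a‖ ≤ ((n : ℝ) + 1) * ‖x * a - a * x‖ := by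
      calc ‖(x * pw a n - pw a n * x) * a‖
          ≤ ‖x * pw a n - pw a n * x‖ * ‖a‖ := norm_mul_le _ _
        _ ≤ (((n : ℝ) + 1) * ‖x * a - a * x‖) * 1 := by
            apply mul_le_mul (by exact_mod_cast ih) ha (norm_nonneg a)
            positivity
        _ = ((n : ℝ) + 1) * ‖x * a - a * x‖ := mul_one _
    have h2 : ‖pw a n * (x * a - a * x)‖ ≤ ‖x * a - a * x‖ := by
      calc ‖pw a n * (x * a - a * x)‖ ≤ ‖pw a n‖ * ‖x * a - a * x‖ := norm_mul_le _ _
        _ ≤ 1 * ‖x * a - a * x‖ := by gcongr; exact norm_pw_le_one a ha n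
        _ = ‖x * a - a * x‖ := one_mul _
    calc ‖x * pw a (n + 1) - pw a (n + 1) * x‖
        ≤ ‖(x * pw a n - pw a n * x) * a‖ + ‖pw a n * (x * a - a * x)‖ := by
          rw [key]; exact norm_add_le _ _
      _ ≤ ((n : ℝ) + 1) * ‖x * a - a * x‖ + ‖x * a - a * x‖ := add_le_add h1 h2
      _ = ((n + 1 : ℕ) + 1 : ℝ) * ‖x * a - a * x‖ := by push_cast; ring

lemma cfcn_pow {A : Type} [NonUnitalCStarAlgebra A] (a : A) (ha : IsSelfAdjoint a) :
    ∀ n : ℕ, cfcₙ (fun t : ℝ => t ^ (n + 1)) a = pw a n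
  | 0 => by simpa [pw] using cfcₙ_id' ℝ a
  | n + 1 => by
    have hfun : (fun t : ℝ => t ^ (n + 1 + 1)) = fun t : ℝ => t ^ (n + 1) * t := by
      funext t; ring
    rw [hfun, cfcₙ_mul (fun t : ℝ => t ^ (n + 1)) (fun t : ℝ => t) a,
      cfcₙ_id' ℝ a, cfcn_pow a ha n]
    rfl

/-- For every `ε > 0` there is `δ > 0`, independent of the C*-algebra, such that
for any positive contraction `a` and any contraction `x` with `‖xa - ax‖ < δ`,
one has `‖x √a - √a x‖ < ε`. -/
theorem commutator_sqrt_estimate (ε : ℝ) (hε : 0 < ε) :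
    ∃ δ : ℝ, 0 < δ ∧
      ∀ (A : Type) [NonUnitalCStarAlgebra A] [PartialOrder A] [StarOrderedRing A],
        ∀ a x : A, 0 ≤ a → ‖a‖ ≤ 1 → ‖x‖ ≤ 1 →
          ‖x * a - a * x‖ < δ → ‖x * CFC.sqrt a - CFC.sqrt a * x‖ < ε := by
  obtain ⟨p, hp⟩ := exists_polynomial_near_of_continuousOn 0 1 Real.sqrt
    Real.continuous_sqrt.continuousOn (ε / 8) (by positivity)
  set q : Polynomial ℝ := p - Polynomial.C (p.eval 0) with hqdef
  have hq0 : q.coeff 0 = 0 := by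
    simp [hqdef, Polynomial.coeff_zero_eq_eval_zero]
  have hqapprox : ∀ t ∈ Set.Icc (0 : ℝ) 1, |q.eval t - Real.sqrt t| < ε / 4 := by
    intro t ht
    have h1 := hp t ht
    have h0 := hp 0 (by norm_num)
    rw [Real.sqrt_zero, sub_zero] at h0
    have heq : q.eval t - Real.sqrt t = (p.eval t - Real.sqrt t) - p.eval 0 := by
      simp [hqdef]; ring
    rw [heq]
    calc |(p.eval t - Real.sqrt t) - p.eval 0|
        ≤ |p.eval t - Real.sqrt t| + |p.eval 0| := abs_sub _ _
      _ < ε / 8 + ε / 8 := add_lt_add h1 h0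
      _ = ε / 4 := by ring
  set n := q.natDegree with hn
  set Cq : ℝ := ∑ k ∈ Finset.range n, |q.coeff (k + 1)| * (k + 1) with hCqdef
  have hCq : 0 ≤ Cq := Finset.sum_nonneg fun k _ => by positivity
  refine ⟨(ε / 4) / (Cq + 1), by positivity, ?_⟩
  intro A _ _ _ a x ha ha1 hx hcomm
  have hδpos : (0 : ℝ) < (ε / 4) / (Cq + 1) := by positivity
  have hsa : IsSelfAdjoint a := .of_nonneg ha
  -- quasispectrum is contained in [0,1]
  have hspec : quasispectrum ℝ a ⊆ Set.Icc 0 1 := by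
    intro t ht
    refine ⟨quasispectrum_nonneg_of_nonneg a ha t ht, ?_⟩
    rw [Unitization.quasispectrum_eq_spectrum_inr' ℝ ℂ a] at ht
    have hle := spectrum.norm_le_norm_of_mem ht
    rw [Unitization.norm_inr] at hle
    calc t ≤ |t| := le_abs_self t
      _ = ‖t‖ := (Real.norm_eq_abs t).symm
      _ ≤ ‖a‖ := hle
      _ ≤ 1 := ha1
  -- the polynomial applied to `a`
  set b : A := cfcₙ (fun t : ℝ => q.eval t) a with hb
  have hb_eq : b = ∑ k ∈ Finset.range n, q.coeff (k + 1) • pw a k := by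
    have hfun : (fun t : ℝ => q.eval t)
        = ∑ k ∈ Finset.range n, (fun t : ℝ => q.coeff (k + 1) * t ^ (k + 1)) := by
      funext t
      rw [Finset.sum_apply, Polynomial.eval_eq_sum_range, Finset.sum_range_succ']
      simp [hq0]
      rfl
    rw [hb, hfun, cfcₙ_sum _ a _ (fun i _ => by fun_prop) (fun i _ => by simp)]
    refine Finset.sum_congr rfl fun k _ => ?_
    rw [cfcₙ_const_mul _ _ a (by fun_prop) (by simp), cfcn_pow a hsa k]
  -- commutator bound for `b`
  have hxb : ‖x * b - b * x‖ ≤ Cq * ‖x * a - a * x‖ := by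
    have hsplit : x * b - b * x
        = ∑ k ∈ Finset.range n, q.coeff (k + 1) • (x * pw a k - pw a k * x) := by
      rw [hb_eq, Finset.mul_sum, Finset.sum_mul, ← Finset.sum_sub_distrib]
      refine Finset.sum_congr rfl fun k _ => ?_
      rw [mul_smul_comm, smul_mul_assoc, ← smul_sub]
    rw [hsplit]
    calc ‖∑ k ∈ Finset.range n, q.coeff (k + 1) • (x * pw a k - pw a k * x)‖
        ≤ ∑ k ∈ Finset.range n, ‖q.coeff (k + 1) • (x * pw a k - pw a k * x)‖ :=
          norm_sum_le _ _
      _ ≤ ∑ k ∈ Finset.range n, |q.coeff (k + 1)| * ((k + 1) * ‖x * a - a * x‖) := by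
          refine Finset.sum_le_sum fun k _ => ?_
          rw [norm_smul, Real.norm_eq_abs]
          exact mul_le_mul_of_nonneg_left (comm_pw_bound a x ha1 k) (abs_nonneg _)
      _ = Cq * ‖x * a - a * x‖ := by
          rw [hCqdef, Finset.sum_mul]
          exact Finset.sum_congr rfl fun k _ => by push_cast; ring
  -- `b` is close to `√a`
  have hsqrt : CFC.sqrt a = cfcₙ Real.sqrt a := by
    rw [CFC.sqrt, cfcₙ_nnreal_eq_real _ _ ha]
    with_unfolding_all rfl
  have hdiff : ‖b - CFC.sqrt a‖ ≤ ε / 4 := by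
    have hsub : b - CFC.sqrt a = cfcₙ (fun t : ℝ => q.eval t - Real.sqrt t) a := by
      rw [hsqrt, hb, cfcₙ_sub (fun t : ℝ => q.eval t) Real.sqrt a (by fun_prop)
        (by show q.eval 0 = 0; rw [← Polynomial.coeff_zero_eq_eval_zero]; exact hq0) (by fun_prop)
        (by simp)]
    rw [hsub]
    apply norm_cfcₙ_le
    intro t ht
    rw [Real.norm_eq_abs]
    exact (hqapprox t (hspec ht)).le
  -- conclusion
  have key : x * CFC.sqrt a - CFC.sqrt a * x
      = (x * b - b * x) + (x * (CFC.sqrt a - b) - (CFC.sqrt a - b) * x) := by noncomm_ring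
  have hsab : ‖CFC.sqrt a - b‖ ≤ ε / 4 := by rw [norm_sub_rev]; exact hdiff
  calc ‖x * CFC.sqrt a - CFC.sqrt a * x‖
      ≤ ‖x * b - b * x‖ + ‖x * (CFC.sqrt a - b) - (CFC.sqrt a - b) * x‖ := by
        rw [key]; exact norm_add_le _ _
    _ ≤ Cq * ‖x * a - a * x‖ +
        (‖x‖ * ‖CFC.sqrt a - b‖ + ‖CFC.sqrt a - b‖ * ‖x‖) := by
        refine add_le_add hxb ?_
        refine (norm_sub_le _ _).trans (add_le_add (norm_mul_le _ _) (norm_mul_le _ _))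
    _ ≤ Cq * ‖x * a - a * x‖ + (1 * (ε / 4) + (ε / 4) * 1) := by
        gcongr <;> first | exact hx | exact hsab | positivity
    _ < (Cq + 1) * ((ε / 4) / (Cq + 1)) + (1 * (ε / 4) + (ε / 4) * 1) := by
        gcongr ?_ + _
        calc Cq * ‖x * a - a * x‖ ≤ Cq * ((ε / 4) / (Cq + 1)) := by
              exact mul_le_mul_of_nonneg_left hcomm.le hCq
          _ < (Cq + 1) * ((ε / 4) / (Cq + 1)) := by
              apply mul_lt_mul_of_pos_right (by linarith) hδpos
    _ = ε / 4 + (ε / 4 + ε / 4) := by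
        rw [mul_comm, div_mul_cancel₀ _ (ne_of_gt (by positivity : (0:ℝ) < Cq + 1))]
        ring
    _ < ε := by linarith
end

section
/- Let A be a C*-algebra, x ∈ M(A) a multiplier, and (e_n) an increasing approximate unit of A consisting of positive contractions. Then the norm of the image of x in the corona algebra Q(A) = M(A)/A equals lim_{n→∞} ‖(1 − e_n)^{1/2} x‖, and also equals lim_{n→∞} lim_{m→∞} ‖(e_m − e_n)^{1/2} x‖. -/
open Filter MultiplierAlgebra

set_option synthInstance.maxHeartbeats 1000000
set_option maxHeartbeats 1000000

section Aux

variable {A : Type*} [NonUnitalCStarAlgebra A] [StarModule ℂ A]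

namespace CoronaAux

lemma cancel_left {z w : A} (h : ∀ c : A, c * z = c * w) : z = w := by
  have h2 : star (z - w) * (z - w) = 0 := by
    have := h (star (z - w))
    rw [mul_sub, this, sub_self]
  rw [← sub_eq_zero]
  exact (CStarRing.star_mul_self_eq_zero_iff (z - w)).mp h2

lemma cancel_right {z w : A} (h : ∀ c : A, z * c = w * c) : z = w := by
  have h2 : (z - w) * star (z - w) = 0 := by
    have := h (star (z - w))
    rw [sub_mul, this, sub_self]
  rw [← sub_eq_zero]
  exact (CStarRing.mul_star_self_eq_zero_iff (z - w)).mp h2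

lemma mul_coe (y : 𝓜(ℂ, A)) (a : A) : y * (a : 𝓜(ℂ, A)) = ((y.fst a : A) : 𝓜(ℂ, A)) := by
  have hfst : ∀ b : A, y.fst (a * b) = y.fst a * b := by
    intro b
    apply cancel_left
    intro c
    calc c * y.fst (a * b) = y.snd c * (a * b) := (y.central c (a * b)).symm
      _ = y.snd c * a * b := (mul_assoc _ _ _).symm
      _ = c * y.fst a * b := by rw [y.central]
      _ = c * (y.fst a * b) := mul_assoc _ _ _
  ext : 1
  refine Prod.ext ?_ ?_
  · ext b
    show (y * (a : 𝓜(ℂ, A))).fst b = _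
    rw [DoubleCentralizer.mul_fst]
    show y.fst ((a : 𝓜(ℂ, A)).fst b) = ((y.fst a : A) : 𝓜(ℂ, A)).fst b
    rw [DoubleCentralizer.coe_fst, DoubleCentralizer.coe_fst]
    simpa using hfst b
  · ext b
    show (y * (a : 𝓜(ℂ, A))).snd b = _
    rw [DoubleCentralizer.mul_snd]
    show (a : 𝓜(ℂ, A)).snd (y.snd b) = ((y.fst a : A) : 𝓜(ℂ, A)).snd b
    rw [DoubleCentralizer.coe_snd, DoubleCentralizer.coe_snd]
    simpa using y.central b a

lemma coe_mul' (a : A) (y : 𝓜(ℂ, A)) : (a : 𝓜(ℂ, A)) * y = ((y.snd a : A) : 𝓜(ℂ, A)) := by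
  have hsnd : ∀ b : A, y.snd (b * a) = b * y.snd a := by
    intro b
    apply cancel_right
    intro c
    calc y.snd (b * a) * c = (b * a) * y.fst c := y.central (b * a) c
      _ = b * (a * y.fst c) := mul_assoc _ _ _
      _ = b * (y.snd a * c) := by rw [y.central]
      _ = b * y.snd a * c := (mul_assoc _ _ _).symm
  ext : 1
  refine Prod.ext ?_ ?_
  · ext b
    show ((a : 𝓜(ℂ, A)) * y).fst b = _
    rw [DoubleCentralizer.mul_fst]
    show (a : 𝓜(ℂ, A)).fst (y.fst b) = ((y.snd a : A) : 𝓜(ℂ, A)).fst b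
    rw [DoubleCentralizer.coe_fst, DoubleCentralizer.coe_fst]
    simpa using (y.central a b).symm
  · ext b
    show ((a : 𝓜(ℂ, A)) * y).snd b = _
    rw [DoubleCentralizer.mul_snd]
    show y.snd ((a : 𝓜(ℂ, A)).snd b) = ((y.snd a : A) : 𝓜(ℂ, A)).snd b
    rw [DoubleCentralizer.coe_snd, DoubleCentralizer.coe_snd]
    simpa using hsnd b

lemma norm_coe (a : A) : ‖(a : 𝓜(ℂ, A))‖ = ‖a‖ := by
  rw [← DoubleCentralizer.norm_fst, DoubleCentralizer.coe_fst]
  exact ContinuousLinearMap.opNorm_mul_apply ℂ A a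

lemma coe_addhom (a b : A) : ((a - b : A) : 𝓜(ℂ, A)) = (a : 𝓜(ℂ, A)) - b :=
  map_sub (DoubleCentralizer.coeHom (𝕜 := ℂ) (A := A)) a b

lemma coe_mulhom (a b : A) : ((a * b : A) : 𝓜(ℂ, A)) = (a : 𝓜(ℂ, A)) * b :=
  map_mul (DoubleCentralizer.coeHom (𝕜 := ℂ) (A := A)) a b

lemma coe_starhom (a : A) : ((star a : A) : 𝓜(ℂ, A)) = star (a : 𝓜(ℂ, A)) :=
  map_star (DoubleCentralizer.coeHom (𝕜 := ℂ) (A := A)) a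

lemma coe_zero' : ((0 : A) : 𝓜(ℂ, A)) = 0 :=
  map_zero (DoubleCentralizer.coeHom (𝕜 := ℂ) (A := A))

/-- The multiplier norm is the sup of `‖y * a‖` over the unit ball of `A`. -/
lemma exists_norm_lt (y : 𝓜(ℂ, A)) {ε : ℝ} (hε : 0 < ε) :
    ∃ a : A, ‖a‖ ≤ 1 ∧ ‖y‖ - ε < ‖y * (a : 𝓜(ℂ, A))‖ := by
  by_contra h
  push_neg at h
  have h0 : (0 : ℝ) ≤ ‖y‖ - ε := by
    have := h 0 (by simp)
    calc (0:ℝ) ≤ ‖y * ((0:A) : 𝓜(ℂ, A))‖ := norm_nonneg _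
      _ ≤ ‖y‖ - ε := this
  have hfst : ‖y.fst‖ ≤ ‖y‖ - ε := by
    apply ContinuousLinearMap.opNorm_le_bound' _ h0
    intro b hb
    have hb' : (0 : ℝ) < ‖b‖ := (norm_nonneg b).lt_of_ne (Ne.symm hb)
    set a : A := ((‖b‖⁻¹ : ℝ) : ℂ) • b with ha_def
    have ha : ‖a‖ ≤ 1 := by
      rw [ha_def, norm_smul]
      simp only [Complex.norm_real, Real.norm_eq_abs, abs_of_nonneg (inv_nonneg.mpr hb'.le)]
      rw [inv_mul_cancel₀ hb'.ne']
    have hya : ‖y * (a : 𝓜(ℂ, A))‖ = ‖b‖⁻¹ * ‖y.fst b‖ := by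
      rw [mul_coe, norm_coe, ha_def, map_smul, norm_smul]
      simp [abs_of_nonneg (inv_nonneg.mpr hb'.le)]
    have := h a ha
    rw [hya] at this
    calc ‖y.fst b‖ = ‖b‖ * (‖b‖⁻¹ * ‖y.fst b‖) := by
          field_simp
      _ ≤ ‖b‖ * (‖y‖ - ε) := by
          exact mul_le_mul_of_nonneg_left this hb'.le
      _ = (‖y‖ - ε) * ‖b‖ := mul_comm _ _
  rw [DoubleCentralizer.norm_fst] at hfst
  linarith

end CoronaAux

end Aux

/-- **The corona norm via an approximate unit.**
For a multiplier `x ∈ M(A)` and an increasing approximate unit `(e_n)` of positive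
contractions of `A`, the norm of the image of `x` in the corona algebra `M(A)/A`
(that is, the distance from `x` to `A`) equals `lim_n ‖(1 − e_n)^{1/2} x‖` and also
equals `lim_n lim_m ‖(e_m − e_n)^{1/2} x‖`. -/
theorem corona_norm_approximate_unit
    {A : Type*} [NonUnitalCStarAlgebra A] [StarModule ℂ A]
    [PartialOrder 𝓜(ℂ, A)] [StarOrderedRing 𝓜(ℂ, A)]
    (x : 𝓜(ℂ, A)) (e : ℕ → A)
    (hpos : ∀ n, (0:𝓜(ℂ, A)) ≤ (e n : 𝓜(ℂ, A)))
    (hcontr : ∀ n, ‖e n‖ ≤ 1)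
    (hmono : ∀ m n, m ≤ n → ((e m : 𝓜(ℂ, A)) ≤ (e n : 𝓜(ℂ, A))))
    (happrox : ∀ a : A, Tendsto (fun n => e n * a) atTop (nhds a) ∧
      Tendsto (fun n => a * e n) atTop (nhds a)) :
    Tendsto (fun n : ℕ => ‖CFC.sqrt ((1:𝓜(ℂ, A)) - (e n : 𝓜(ℂ, A))) * x‖) atTop
      (nhds (Metric.infDist x (Set.range ((↑) : A → 𝓜(ℂ, A))))) ∧
    ∃ L : ℕ → ℝ,
      (∀ n : ℕ, Tendsto (fun m : ℕ => ‖CFC.sqrt ((e m : 𝓜(ℂ, A)) - (e n : 𝓜(ℂ, A))) * x‖)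
        atTop (nhds (L n))) ∧
      Tendsto L atTop (nhds (Metric.infDist x (Set.range ((↑) : A → 𝓜(ℂ, A))))) := by
  open CoronaAux in
  -- notation and basic facts
  set Acl : Set 𝓜(ℂ, A) := Set.range ((↑) : A → 𝓜(ℂ, A)) with hAcl
  set d : ℝ := Metric.infDist x Acl with hd
  have hmem0 : (0 : 𝓜(ℂ, A)) ∈ Acl := ⟨0, coe_zero'⟩
  -- `e n ≤ 1` in the multiplier algebra
  have hone : ∀ n, (e n : 𝓜(ℂ, A)) ≤ 1 := by
    intro n
    rw [← CStarAlgebra.norm_le_one_iff_of_nonneg _ (hpos n), norm_coe]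
    exact hcontr n
  have hc_nonneg : ∀ n, (0 : 𝓜(ℂ, A)) ≤ 1 - (e n : 𝓜(ℂ, A)) := fun n =>
    sub_nonneg.mpr (hone n)
  -- the C⋆-identity for `sqrt`
  have hCstar : ∀ (c : 𝓜(ℂ, A)), 0 ≤ c → ∀ z : 𝓜(ℂ, A),
      ‖CFC.sqrt c * z‖ ^ 2 = ‖star z * c * z‖ := by
    intro c hc z
    have hsa : star (CFC.sqrt c) = CFC.sqrt c :=
      (IsSelfAdjoint.of_nonneg (CFC.sqrt_nonneg (a := c))).star_eq
    have : star (CFC.sqrt c * z) * (CFC.sqrt c * z) = star z * c * z := by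
      rw [star_mul, hsa, mul_assoc, ← mul_assoc (CFC.sqrt c), CFC.sqrt_mul_sqrt_self c hc,
        ← mul_assoc]
    rw [sq, ← CStarRing.norm_star_mul_self, this]
  -- norm bound for `sqrt (1 - e n)`
  have hsqrt_norm : ∀ n, ‖CFC.sqrt ((1:𝓜(ℂ, A)) - e n)‖ ≤ 1 := by
    intro n
    have h1 : ‖(1:𝓜(ℂ, A)) - e n‖ ≤ 1 := by
      rw [CStarAlgebra.norm_le_one_iff_of_nonneg _ (hc_nonneg n)]
      simpa using sub_le_self (1 : 𝓜(ℂ, A)) (hpos n)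
    have h2 : ‖CFC.sqrt ((1:𝓜(ℂ, A)) - e n)‖ * ‖CFC.sqrt ((1:𝓜(ℂ, A)) - e n)‖
        = ‖(1:𝓜(ℂ, A)) - e n‖ := by
      rw [← CStarRing.norm_star_mul_self,
        (IsSelfAdjoint.of_nonneg (CFC.sqrt_nonneg (a := (1:𝓜(ℂ, A)) - e n))).star_eq,
        CFC.sqrt_mul_sqrt_self _ (hc_nonneg n)]
    nlinarith [norm_nonneg (CFC.sqrt ((1:𝓜(ℂ, A)) - e n))]
  -- lower bound: `d ≤ ‖sqrt (1 - e n) * x‖`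
  have hlow : ∀ n, d ≤ ‖CFC.sqrt ((1:𝓜(ℂ, A)) - e n) * x‖ := by
    intro n
    have hmem : (e n : 𝓜(ℂ, A)) * x ∈ Acl := ⟨x.snd (e n), (coe_mul' (e n) x).symm⟩
    have h1 : d ≤ dist x ((e n : 𝓜(ℂ, A)) * x) := Metric.infDist_le_dist_of_mem hmem
    have h2 : x - (e n : 𝓜(ℂ, A)) * x
        = CFC.sqrt ((1:𝓜(ℂ, A)) - e n) * (CFC.sqrt ((1:𝓜(ℂ, A)) - e n) * x) := by
      rw [← mul_assoc, CFC.sqrt_mul_sqrt_self _ (hc_nonneg n), sub_mul, one_mul]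
    calc d ≤ dist x ((e n : 𝓜(ℂ, A)) * x) := h1
      _ = ‖x - (e n : 𝓜(ℂ, A)) * x‖ := dist_eq_norm _ _
      _ = ‖CFC.sqrt ((1:𝓜(ℂ, A)) - e n) * (CFC.sqrt ((1:𝓜(ℂ, A)) - e n) * x)‖ := by rw [h2]
      _ ≤ ‖CFC.sqrt ((1:𝓜(ℂ, A)) - e n)‖ * ‖CFC.sqrt ((1:𝓜(ℂ, A)) - e n) * x‖ :=
          norm_mul_le _ _
      _ ≤ 1 * ‖CFC.sqrt ((1:𝓜(ℂ, A)) - e n) * x‖ :=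
          mul_le_mul_of_nonneg_right (hsqrt_norm n) (norm_nonneg _)
      _ = ‖CFC.sqrt ((1:𝓜(ℂ, A)) - e n) * x‖ := one_mul _
  -- `sqrt (1 - e n) * a → 0` for every `a : A`
  have hto0 : ∀ a : A,
      Tendsto (fun n => ‖CFC.sqrt ((1:𝓜(ℂ, A)) - e n) * (a : 𝓜(ℂ, A))‖) atTop (nhds 0) := by
    intro a
    have h1 : ∀ n, ‖CFC.sqrt ((1:𝓜(ℂ, A)) - e n) * (a : 𝓜(ℂ, A))‖ ^ 2
        = ‖star a * a - star a * (e n * a)‖ := by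
      intro n
      rw [hCstar _ (hc_nonneg n) _]
      have : star (a : 𝓜(ℂ, A)) * ((1:𝓜(ℂ, A)) - e n) * (a : 𝓜(ℂ, A))
          = ((star a * a - star a * (e n * a) : A) : 𝓜(ℂ, A)) := by
        rw [coe_addhom, coe_mulhom, coe_mulhom, coe_mulhom, coe_starhom]
        rw [mul_sub, sub_mul, mul_one, mul_assoc]
      rw [this, norm_coe]
    have h2 : Tendsto (fun n => star a * a - star a * (e n * a)) atTop (nhds 0) := by
      have := ((happrox a).1.const_mul (star a)).const_sub (star a * a)
      simpa using this
    have h3 : Tendsto (fun n => ‖star a * a - star a * (e n * a)‖) atTop (nhds 0) := by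
      simpa using h2.norm
    have h4 : Tendsto (fun n => ‖CFC.sqrt ((1:𝓜(ℂ, A)) - e n) * (a : 𝓜(ℂ, A))‖ ^ 2)
        atTop (nhds 0) := by
      simpa only [← h1] using h3
    have h5 := (Real.continuous_sqrt.tendsto' 0 0 (by simp)).comp h4
    simpa [Function.comp_def, Real.sqrt_sq (norm_nonneg _)] using h5
  -- Part 1
  have part1 : Tendsto (fun n : ℕ => ‖CFC.sqrt ((1:𝓜(ℂ, A)) - (e n : 𝓜(ℂ, A))) * x‖) atTop
      (nhds d) := by
    rw [Metric.tendsto_atTop]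
    intro ε hε
    obtain ⟨z, hz, hzd⟩ : ∃ z ∈ Acl, dist x z < d + ε / 2 :=
      (Metric.infDist_lt_iff ⟨0, hmem0⟩).mp (by linarith)
    obtain ⟨a, rfl⟩ := hz
    obtain ⟨N, hN⟩ := (Metric.tendsto_atTop.mp (hto0 a)) (ε / 2) (by linarith)
    refine ⟨N, fun n hn => ?_⟩
    have hup : ‖CFC.sqrt ((1:𝓜(ℂ, A)) - e n) * x‖ < d + ε := by
      have hsplit : CFC.sqrt ((1:𝓜(ℂ, A)) - e n) * x
          = CFC.sqrt ((1:𝓜(ℂ, A)) - e n) * (x - (a : 𝓜(ℂ, A)))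
            + CFC.sqrt ((1:𝓜(ℂ, A)) - e n) * (a : 𝓜(ℂ, A)) := by
        rw [← mul_add]; congr 1; abel
      have hN' := hN n hn
      rw [Real.dist_eq, sub_zero, abs_of_nonneg (norm_nonneg _)] at hN'
      have hdist : ‖x - (a : 𝓜(ℂ, A))‖ < d + ε / 2 := by
        rwa [dist_eq_norm] at hzd
      calc ‖CFC.sqrt ((1:𝓜(ℂ, A)) - e n) * x‖
          ≤ ‖CFC.sqrt ((1:𝓜(ℂ, A)) - e n) * (x - (a : 𝓜(ℂ, A)))‖
            + ‖CFC.sqrt ((1:𝓜(ℂ, A)) - e n) * (a : 𝓜(ℂ, A))‖ := by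
            rw [hsplit]; exact norm_add_le _ _
        _ ≤ ‖CFC.sqrt ((1:𝓜(ℂ, A)) - e n)‖ * ‖x - (a : 𝓜(ℂ, A))‖
            + ‖CFC.sqrt ((1:𝓜(ℂ, A)) - e n) * (a : 𝓜(ℂ, A))‖ :=
            add_le_add (norm_mul_le _ _) le_rfl
        _ ≤ 1 * ‖x - (a : 𝓜(ℂ, A))‖ + ‖CFC.sqrt ((1:𝓜(ℂ, A)) - e n) * (a : 𝓜(ℂ, A))‖ :=
            add_le_add (mul_le_mul_of_nonneg_right (hsqrt_norm n) (norm_nonneg _)) le_rfl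
        _ < 1 * (d + ε / 2) + ε / 2 := by
            apply add_lt_add
            · rw [one_mul]; rw [one_mul]; exact hdist
            · exact hN'
        _ = d + ε := by ring
    rw [Real.dist_eq, abs_of_nonneg (by linarith [hlow n])]
    linarith [hlow n]
  refine ⟨part1, fun n => ‖CFC.sqrt ((1:𝓜(ℂ, A)) - (e n : 𝓜(ℂ, A))) * x‖, ?_, part1⟩
  -- Part 2: for each `n`, `‖sqrt (e m - e n) * x‖ → ‖sqrt (1 - e n) * x‖`
  intro n
  set c : 𝓜(ℂ, A) := (1:𝓜(ℂ, A)) - e n with hc_def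
  set y : 𝓜(ℂ, A) := CFC.sqrt c * x with hy_def
  -- upper bound
  have hup : ∀ m, n ≤ m → ‖CFC.sqrt ((e m : 𝓜(ℂ, A)) - e n) * x‖ ≤ ‖y‖ := by
    intro m hm
    have hdm : (0 : 𝓜(ℂ, A)) ≤ (e m : 𝓜(ℂ, A)) - e n := sub_nonneg.mpr (hmono n m hm)
    have hdc : (e m : 𝓜(ℂ, A)) - e n ≤ c := sub_le_sub_right (hone m) _
    have h1 : ‖CFC.sqrt ((e m : 𝓜(ℂ, A)) - e n) * x‖ ^ 2
        = ‖star x * ((e m : 𝓜(ℂ, A)) - e n) * x‖ := hCstar _ hdm x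
    have h2 : ‖y‖ ^ 2 = ‖star x * c * x‖ := hCstar _ (hc_nonneg n) x
    have h3 : star x * ((e m : 𝓜(ℂ, A)) - e n) * x ≤ star x * c * x :=
      star_left_conjugate_le_conjugate hdc x
    have h4 : (0 : 𝓜(ℂ, A)) ≤ star x * ((e m : 𝓜(ℂ, A)) - e n) * x :=
      star_left_conjugate_nonneg hdm x
    have h5 : ‖star x * ((e m : 𝓜(ℂ, A)) - e n) * x‖ ≤ ‖star x * c * x‖ :=
      CStarAlgebra.norm_le_norm_of_nonneg_of_le h4 h3
    nlinarith [norm_nonneg (CFC.sqrt ((e m : 𝓜(ℂ, A)) - e n) * x), norm_nonneg y]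
  rw [Metric.tendsto_atTop]
  intro ε hε
  by_cases hsmall : ‖y‖ < ε
  · refine ⟨n, fun m hm => ?_⟩
    rw [Real.dist_eq, abs_of_nonpos (by linarith [hup m hm])]
    have := hup m hm
    have hnn : (0:ℝ) ≤ ‖CFC.sqrt ((e m : 𝓜(ℂ, A)) - e n) * x‖ := norm_nonneg _
    linarith
  · push_neg at hsmall
    obtain ⟨a, ha1, ha2⟩ := CoronaAux.exists_norm_lt y (half_pos hε)
    have hεy : (0:ℝ) ≤ ‖y‖ - ε / 2 := by linarith
    -- `b` with `↑b = x * ↑a`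
    set b : A := x.fst a with hb_def
    have hb : x * (a : 𝓜(ℂ, A)) = (b : 𝓜(ℂ, A)) := CoronaAux.mul_coe x a
    -- the limit quantity
    have hya_sq : ‖y * (a : 𝓜(ℂ, A))‖ ^ 2
        = ‖star b * b - star b * (e n * b)‖ := by
      have h1 : y * (a : 𝓜(ℂ, A)) = CFC.sqrt c * (x * (a : 𝓜(ℂ, A))) := by
        rw [hy_def, mul_assoc]
      rw [h1, hb, hCstar _ (hc_nonneg n) _]
      have : star (b : 𝓜(ℂ, A)) * c * (b : 𝓜(ℂ, A))
          = ((star b * b - star b * (e n * b) : A) : 𝓜(ℂ, A)) := by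
        rw [CoronaAux.coe_addhom, CoronaAux.coe_mulhom, CoronaAux.coe_mulhom,
          CoronaAux.coe_mulhom, CoronaAux.coe_starhom, hc_def]
        rw [mul_sub, sub_mul, mul_one, mul_assoc]
      rw [this, CoronaAux.norm_coe]
    have hwt : Tendsto (fun m => ‖star b * (e m * b) - star b * (e n * b)‖) atTop
        (nhds (‖star b * b - star b * (e n * b)‖)) := by
      have h2 : Tendsto (fun m => star b * (e m * b) - star b * (e n * b)) atTop
          (nhds (star b * b - star b * (e n * b))) :=
        (((happrox b).1.const_mul (star b)).sub_const (star b * (e n * b)))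
      exact h2.norm
    -- lower estimate for the squares
    have hsq : ∀ m, n ≤ m → ‖star b * (e m * b) - star b * (e n * b)‖
        ≤ ‖CFC.sqrt ((e m : 𝓜(ℂ, A)) - e n) * x‖ ^ 2 := by
      intro m hm
      have hdm : (0 : 𝓜(ℂ, A)) ≤ (e m : 𝓜(ℂ, A)) - e n := sub_nonneg.mpr (hmono n m hm)
      have hX : ‖CFC.sqrt ((e m : 𝓜(ℂ, A)) - e n) * x‖ ^ 2
          = ‖star x * ((e m : 𝓜(ℂ, A)) - e n) * x‖ := hCstar _ hdm x
      have hcoe : ((star b * (e m * b) - star b * (e n * b) : A) : 𝓜(ℂ, A))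
          = star (a : 𝓜(ℂ, A)) * (star x * ((e m : 𝓜(ℂ, A)) - e n) * x) * (a : 𝓜(ℂ, A)) := by
        rw [CoronaAux.coe_addhom, CoronaAux.coe_mulhom, CoronaAux.coe_mulhom,
          CoronaAux.coe_mulhom, CoronaAux.coe_mulhom, CoronaAux.coe_starhom]
        rw [← hb, star_mul]
        noncomm_ring
      have hstar_a : ‖star (a : 𝓜(ℂ, A))‖ ≤ 1 := by
        rw [norm_star, CoronaAux.norm_coe]; exact ha1
      have hnorm_a : ‖(a : 𝓜(ℂ, A))‖ ≤ 1 := by rw [CoronaAux.norm_coe]; exact ha1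
      calc ‖star b * (e m * b) - star b * (e n * b)‖
          = ‖((star b * (e m * b) - star b * (e n * b) : A) : 𝓜(ℂ, A))‖ :=
            (CoronaAux.norm_coe _).symm
        _ = ‖star (a : 𝓜(ℂ, A)) * (star x * ((e m : 𝓜(ℂ, A)) - e n) * x) * (a : 𝓜(ℂ, A))‖ := by
            rw [hcoe]
        _ ≤ ‖star (a : 𝓜(ℂ, A)) * (star x * ((e m : 𝓜(ℂ, A)) - e n) * x)‖ * ‖(a : 𝓜(ℂ, A))‖ :=
            norm_mul_le _ _
        _ ≤ ‖star (a : 𝓜(ℂ, A)) * (star x * ((e m : 𝓜(ℂ, A)) - e n) * x)‖ * 1 :=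
            mul_le_mul_of_nonneg_left hnorm_a (norm_nonneg _)
        _ = ‖star (a : 𝓜(ℂ, A)) * (star x * ((e m : 𝓜(ℂ, A)) - e n) * x)‖ := mul_one _
        _ ≤ ‖star (a : 𝓜(ℂ, A))‖ * ‖star x * ((e m : 𝓜(ℂ, A)) - e n) * x‖ := norm_mul_le _ _
        _ ≤ 1 * ‖star x * ((e m : 𝓜(ℂ, A)) - e n) * x‖ :=
            mul_le_mul_of_nonneg_right hstar_a (norm_nonneg _)
        _ = ‖star x * ((e m : 𝓜(ℂ, A)) - e n) * x‖ := one_mul _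
        _ = ‖CFC.sqrt ((e m : 𝓜(ℂ, A)) - e n) * x‖ ^ 2 := hX.symm
    -- eventually the squares are large
    have hlim_lt : (‖y‖ - ε / 2) ^ 2 < ‖star b * b - star b * (e n * b)‖ := by
      rw [← hya_sq]
      exact pow_lt_pow_left₀ ha2 hεy two_ne_zero
    obtain ⟨N, hN⟩ := (Metric.tendsto_atTop.mp hwt) _ (sub_pos.mpr hlim_lt)
    refine ⟨max n N, fun m hm => ?_⟩
    have hmn : n ≤ m := le_trans (le_max_left _ _) hm
    have hmN : N ≤ m := le_trans (le_max_right _ _) hm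
    have hN' := hN m hmN
    rw [Real.dist_eq] at hN'
    have hlarge : (‖y‖ - ε / 2) ^ 2 < ‖star b * (e m * b) - star b * (e n * b)‖ := by
      have := abs_lt.mp hN'
      linarith [this.1]
    have hsq' := hsq m hmn
    have hgt : ‖y‖ - ε / 2 < ‖CFC.sqrt ((e m : 𝓜(ℂ, A)) - e n) * x‖ := by
      by_contra hcon
      push_neg at hcon
      have : ‖CFC.sqrt ((e m : 𝓜(ℂ, A)) - e n) * x‖ ^ 2 ≤ (‖y‖ - ε / 2) ^ 2 :=
        pow_le_pow_left₀ (norm_nonneg _) hcon 2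
      linarith
    have hle := hup m hmn
    rw [Real.dist_eq, abs_of_nonpos (by linarith)]
    linarith
end
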